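/- arXiv:1610.02059 — 6 statements merged into one kernel-verified Lean document; each statement's English description precedes it below -/
import Mathlib

section
/- Let F be a free group, p a prime, and A an F-module. If δ : F → A is a derivation, then for every x ∈ F, δ(x^p) lies in the subgroup generated by p·δ(F) together with [δ(F), F, ..., F] (with F appearing p−1 times), where [m, g] := m·g − m denotes the module commutator. -/
/-!
Write `T` for the action of `x` and `U = T - 1`. The cocycle identity
`δ (x ^ (n + 1)) = T (δ (x ^ n)) + δ x` gives `δ (x ^ n) = (1 + T + ⋯ + T ^ (n - 1)) (δ x)`,
and expanding `T = U + 1` turns this into `∑_{j < n} (n choose (j + 1)) • U ^ j (δ x)`.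
For `n = p` every coefficient except the top one (`j = p - 1`, coefficient `1`) is divisible
by `p`, while `U ^ j` maps `δ(F)` into the `j`-th iterated module commutator.
-/

/-- The "module commutator": for a subgroup `S` of the `G`-module `A`, the subgroup
generated by all `m·g − m` with `m ∈ S`, `g ∈ G`. -/
def modComm {G A : Type*} [AddCommGroup A] (act : A → G → A) (S : AddSubgroup A) :
    AddSubgroup A :=
  AddSubgroup.closure {x | ∃ m ∈ S, ∃ g : G, x = act m g - m}

/-- Iterated module commutator `[D, ᵢ G]`, starting from `D` at `i = 0`. -/
def iterComm {G A : Type*} [AddCommGroup A] (act : A → G → A) (D : AddSubgroup A) :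
    ℕ → AddSubgroup A
  | 0 => D
  | n + 1 => modComm act (iterComm act D n)

open Finset

theorem geom_sum_add_one_eq_sum_choose {R : Type*} [Semiring R] (u : R) (n : ℕ) :
    ∑ k ∈ range n, (u + 1) ^ k = ∑ j ∈ range n, n.choose (j + 1) • u ^ j := by
  induction n with
  | zero => simp
  | succ n ih =>
    have binomial : (u + 1) ^ n = ∑ j ∈ range (n + 1), n.choose j • u ^ j := by
      simp only [(Commute.one_right u).add_pow, one_pow, mul_one, nsmul_eq_mul, Nat.cast_comm]
    have pascal : ∑ j ∈ range (n + 1), (n + 1).choose (j + 1) • u ^ j =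
        ∑ j ∈ range (n + 1), n.choose j • u ^ j +
          ∑ j ∈ range n, n.choose (j + 1) • u ^ j := by
      simp only [Nat.choose_succ_succ, add_smul, sum_add_distrib, sum_range_succ _ n,
        Nat.choose_succ_self, zero_smul, add_zero]
      abel
    rw [sum_range_succ, ih, binomial, pascal, add_comm]

theorem nsmul_mem_closure_image_nsmul {A : Type*} [AddCommGroup A] {s : Set A} {m : A}
    (hm : m ∈ AddSubgroup.closure s) (n : ℕ) :
    n • m ∈ AddSubgroup.closure ((fun a => n • a) '' s) := by
  have := AddSubgroup.mem_map_of_mem (nsmulAddMonoidHom n) hm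
  rwa [AddMonoidHom.map_closure] at this

section ModuleCommutator

variable {G A : Type*} [AddCommGroup A] (act : A → G → A)
  (act_add : ∀ m n g, act (m + n) g = act m g + act n g)

theorem iterComm_le {S : AddSubgroup A} (hS : ∀ m ∈ S, ∀ g, act m g ∈ S) (n : ℕ) :
    iterComm act S n ≤ S := by
  induction n with
  | zero => exact le_rfl
  | succ n ih =>
    refine AddSubgroup.closure_le _ |>.mpr ?_
    rintro _ ⟨m, hm, g, rfl⟩
    exact S.sub_mem (hS m (ih hm) g) (ih hm)

def actEnd (g : G) : Module.End ℤ A :=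
  (AddMonoidHom.mk' (act · g) fun m n => act_add m n g).toIntLinearMap

theorem actEnd_apply (g : G) (m : A) : actEnd act act_add g m = act m g := rfl

theorem pow_actEnd_sub_one_mem_iterComm {S : AddSubgroup A} {m : A} (hm : m ∈ S) (g : G)
    (j : ℕ) : ((actEnd act act_add g - 1) ^ j) m ∈ iterComm act S j := by
  induction j with
  | zero => exact hm
  | succ j ih =>
    rw [pow_succ', Module.End.mul_apply]
    exact AddSubgroup.subset_closure ⟨_, ih, g, rfl⟩

end ModuleCommutator

section Derivation

variable {G A : Type*} [Monoid G] [AddCommGroup A] {act : A → G → A}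
  {δ : G → A} (hδ : ∀ g h, δ (g * h) = act (δ g) h + δ h)
include hδ

theorem act_mem_closure_range_derivation
    (act_add : ∀ m n g, act (m + n) g = act m g + act n g) {m : A}
    (hm : m ∈ AddSubgroup.closure (Set.range δ)) (g : G) :
    act m g ∈ AddSubgroup.closure (Set.range δ) := by
  let actHom : A →+ A := AddMonoidHom.mk' (act · g) fun m n => act_add m n g
  suffices (AddSubgroup.closure (Set.range δ)).map actHom ≤ AddSubgroup.closure (Set.range δ) by
    exact this (AddSubgroup.mem_map_of_mem actHom hm)
  rw [AddMonoidHom.map_closure, AddSubgroup.closure_le]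
  rintro _ ⟨_, ⟨y, rfl⟩, rfl⟩
  have hact : actHom (δ y) = δ (y * g) - δ g := by
    rw [AddMonoidHom.mk'_apply, hδ]
    abel
  rw [SetLike.mem_coe, hact]
  exact AddSubgroup.sub_mem _ (AddSubgroup.subset_closure ⟨_, rfl⟩)
    (AddSubgroup.subset_closure ⟨_, rfl⟩)

theorem derivation_one (act_one : ∀ m, act m 1 = m) : δ 1 = 0 := by
  simpa only [mul_one, act_one, left_eq_add] using hδ 1 1

theorem derivation_pow_eq_geom_sum (act_add : ∀ m n g, act (m + n) g = act m g + act n g)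
    (act_one : ∀ m, act m 1 = m) (x : G) (n : ℕ) :
    δ (x ^ n) = (∑ k ∈ range n, actEnd act act_add x ^ k) (δ x) := by
  induction n with
  | zero => simpa using derivation_one hδ act_one
  | succ n ih =>
    rw [pow_succ, hδ, ih, geom_sum_succ, LinearMap.add_apply, Module.End.mul_apply,
      actEnd_apply, Module.End.one_apply]

end Derivation

theorem stmt2_general {α A : Type*} [AddCommGroup A] (p : ℕ) (hp : p.Prime)
    (act : A → FreeGroup α → A)
    (act_add : ∀ m n g, act (m + n) g = act m g + act n g)
    (act_one : ∀ m, act m 1 = m)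
    (δ : FreeGroup α → A)
    (hδ : ∀ g h, δ (g * h) = act (δ g) h + δ h) :
    ∀ x : FreeGroup α,
      δ (x ^ p) ∈
        AddSubgroup.closure ((fun m => p • m) '' Set.range δ) ⊔
          iterComm act (AddSubgroup.closure (Set.range δ)) (p - 1) := by
  intro x
  set D := AddSubgroup.closure (Set.range δ)
  set U := actEnd act act_add x - 1
  have hδx : δ x ∈ D := AddSubgroup.subset_closure ⟨x, rfl⟩
  have expansion : δ (x ^ p) = ∑ j ∈ range p, p.choose (j + 1) • (U ^ j) (δ x) := by
    rw [derivation_pow_eq_geom_sum hδ act_add act_one, ← sub_add_cancel (actEnd act act_add x) 1,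
      geom_sum_add_one_eq_sum_choose, LinearMap.sum_apply]
    rfl
  rw [expansion]
  refine AddSubgroup.sum_mem _ fun j hj => ?_
  have hUj : (U ^ j) (δ x) ∈ iterComm act D j :=
    pow_actEnd_sub_one_mem_iterComm act act_add hδx x j
  by_cases hlt : j + 1 < p
  · obtain ⟨k, hk⟩ := hp.dvd_choose_self j.succ_ne_zero hlt
    have hD : (U ^ j) (δ x) ∈ D :=
      iterComm_le act (fun m hm g => act_mem_closure_range_derivation hδ act_add hm g) j hUj
    rw [hk, mul_comm, mul_smul]
    exact AddSubgroup.nsmul_mem _ (AddSubgroup.mem_sup_left (nsmul_mem_closure_image_nsmul hD p)) k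
  · have htop : j + 1 = p := by have := mem_range.mp hj; omega
    rw [htop, Nat.choose_self, one_smul, ← htop, Nat.add_sub_cancel]
    exact AddSubgroup.mem_sup_right hUj

/-- For a derivation `δ` from a free group `F` to an `F`-module `A` and a prime `p`,
`δ (x ^ p)` lies in the subgroup generated by `p • δ(F)` together with
`[δ(F), _{p-1} F]`. -/
theorem stmt2 {α A : Type*} [AddCommGroup A] (p : ℕ) (hp : p.Prime)
    (act : A → FreeGroup α → A)
    (act_add : ∀ m n g, act (m + n) g = act m g + act n g)
    (act_one : ∀ m, act m 1 = m)
    (act_mul : ∀ m g h, act m (g * h) = act (act m g) h)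
    (δ : FreeGroup α → A)
    (hδ : ∀ g h, δ (g * h) = act (δ g) h + δ h) :
    ∀ x : FreeGroup α,
      δ (x ^ p) ∈
        AddSubgroup.closure ((fun m => p • m) '' Set.range δ) ⊔
          iterComm act (AddSubgroup.closure (Set.range δ)) (p - 1) :=
  stmt2_general p hp act act_add act_one δ hδ
end

section
/- Let G be a group, A a G-module with trivial action of the i-fold commutator, i.e. [A,ᵢG] = 0, and let δ : G → A be a derivation. Then δ(γᵢ(G)) is contained in the subgroup [δ(G),ᵢ₋₁G], where γᵢ(G) denotes the i-th term of the lower central series of G. -/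
/-!
A derivation `δ` satisfies `δ ⁅p, q⁆ · (q p) = (δ p · q - δ p) - (δ q · p - δ q)`, and for fixed `w`
the map `x ↦ w · x - w` is again a derivation. So if `δ` takes values in `[D, ₙG]`, induction on
`k` (for all derivations and all `n` at once) gives `δ(γₖ₊₁(G)) ⊆ [D, ₙ₊ₖG]`: the first term is in
`[D, ₙ₊ₖ₊₁G]` by the induction hypothesis for `δ`, the second by the induction hypothesis for the
derivation `x ↦ δ q · x - δ q`, whose values lie in `[D, ₙ₊₁G]`. For `D` the subgroup generated by
`δ(G)` and `n = 0` this is the theorem.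
-/

open scoped commutatorElement

theorem sub_mem_modComm {G A : Type*} [AddCommGroup A] {act : A → G → A} {S : AddSubgroup A}
    {m : A} (hm : m ∈ S) (g : G) : act m g - m ∈ modComm act S :=
  AddSubgroup.subset_closure ⟨m, hm, g, rfl⟩

section

variable {G A : Type*} [Group G] [AddCommGroup A]

structure IsRightAction (act : A → G → A) : Prop where
  add : ∀ m n g, act (m + n) g = act m g + act n g
  one : ∀ m, act m 1 = m
  mul : ∀ m g h, act m (g * h) = act (act m g) h

def IsDerivation (act : A → G → A) (δ : G → A) : Prop :=
  ∀ g h, δ (g * h) = act (δ g) h + δ h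

def IsActInvariant (act : A → G → A) (S : AddSubgroup A) : Prop :=
  ∀ m ∈ S, ∀ g, act m g ∈ S

variable {act : A → G → A}

namespace IsRightAction

variable (h : IsRightAction act)
include h

def actHom (g : G) : A →+ A :=
  AddMonoidHom.mk' (act · g) (h.add · · g)

theorem act_zero (g : G) : act 0 g = 0 :=
  (h.actHom g).map_zero

theorem act_sub (m n : A) (g : G) : act (m - n) g = act m g - act n g :=
  (h.actHom g).map_sub m n

theorem act_neg (m : A) (g : G) : act (-m) g = -act m g :=
  (h.actHom g).map_neg m

theorem act_act_inv (m : A) (g : G) : act (act m g) g⁻¹ = m := by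
  rw [← h.mul, mul_inv_cancel, h.one]

theorem isActInvariant_modComm (S : AddSubgroup A) : IsActInvariant act (modComm act S) := by
  intro m hm g
  induction hm using AddSubgroup.closure_induction with
  | mem x hx =>
    obtain ⟨m, hm, g', rfl⟩ := hx
    have e : act (act m g' - m) g = (act m (g' * g) - m) - (act m g - m) := by
      rw [h.act_sub, h.mul]; abel
    rw [e]
    exact sub_mem (sub_mem_modComm hm _) (sub_mem_modComm hm _)
  | zero => rw [h.act_zero]; exact zero_mem _
  | add x y _ _ hx hy => rw [h.add]; exact add_mem hx hy
  | neg x _ hx => rw [h.act_neg]; exact neg_mem hx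

theorem isDerivation_act_sub (w : A) : IsDerivation act (fun x => act w x - w) := by
  intro g g'
  simp only [h.mul, h.act_sub]
  abel

theorem isActInvariant_iterComm_succ (D : AddSubgroup A) (n : ℕ) :
    IsActInvariant act (iterComm act D (n + 1)) :=
  h.isActInvariant_modComm _

end IsRightAction

namespace IsDerivation

variable {δ : G → A}

variable (h : IsRightAction act) (hδ : IsDerivation act δ)
include h hδ

theorem map_one : δ 1 = 0 := by
  simpa [h.one] using hδ 1 1

theorem map_inv (g : G) : δ g⁻¹ = -act (δ g) g⁻¹ := by
  have e := hδ g g⁻¹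
  rw [mul_inv_cancel, hδ.map_one h] at e
  exact eq_neg_of_add_eq_zero_right e.symm

/-- Apply `δ` to `⁅p, q⁆ * (q * p) = p * q`. -/
theorem map_commutatorElement (p q : G) :
    δ ⁅p, q⁆ = act ((act (δ p) q - δ p) - (act (δ q) p - δ q)) (q * p)⁻¹ := by
  have e := hδ ⁅p, q⁆ (q * p)
  rw [show ⁅p, q⁆ * (q * p) = p * q by rw [commutatorElement_def]; group, hδ, hδ] at e
  rw [← h.act_act_inv (δ ⁅p, q⁆) (q * p)]
  congr 1
  linear_combination (norm := abel) -e

def comap {T : AddSubgroup A} (hT : IsActInvariant act T) : Subgroup G where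
  carrier := {x | δ x ∈ T}
  mul_mem' {a b} (ha : δ a ∈ T) (hb : δ b ∈ T) := by
    show δ (a * b) ∈ T
    rw [hδ a b]
    exact add_mem (hT _ ha b) hb
  one_mem' := by
    show δ 1 ∈ T
    rw [hδ.map_one h]
    exact zero_mem T
  inv_mem' {a} (ha : δ a ∈ T) := by
    show δ a⁻¹ ∈ T
    rw [hδ.map_inv h]
    exact neg_mem (hT _ ha _)

end IsDerivation

theorem IsDerivation.mem_iterComm_of_mem_lowerCentralSeries (h : IsRightAction act)
    {D : AddSubgroup A} {n : ℕ} {δ : G → A} (hδ : IsDerivation act δ)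
    (hn : ∀ g, δ g ∈ iterComm act D n) (k : ℕ) :
    ∀ x ∈ (⊤ : Subgroup G).lowerCentralSeries k, δ x ∈ iterComm act D (n + k) := by
  induction k generalizing n δ with
  | zero => exact fun x _ => hn x
  | succ k ih =>
    have hT := h.isActInvariant_iterComm_succ D (n + k)
    suffices (⊤ : Subgroup G).lowerCentralSeries (k + 1) ≤ hδ.comap h hT from fun x hx => this hx
    rw [Subgroup.lowerCentralSeries_succ, Subgroup.commutator_le]
    intro p hp q _
    change δ ⁅p, q⁆ ∈ iterComm act D (n + k + 1)
    rw [hδ.map_commutatorElement h]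
    have hpq : act (δ p) q - δ p ∈ iterComm act D (n + k + 1) :=
      sub_mem_modComm (ih hδ hn p hp) q
    have hqp : act (δ q) p - δ q ∈ iterComm act D (n + 1 + k) :=
      ih (h.isDerivation_act_sub (δ q)) (fun g => sub_mem_modComm (hn q) g) p hp
    rw [Nat.add_right_comm] at hqp
    exact hT _ (sub_mem hpq hqp) _

end

theorem stmt3_general {G A : Type*} [Group G] [AddCommGroup A]
    (act : A → G → A)
    (act_add : ∀ m n g, act (m + n) g = act m g + act n g)
    (act_one : ∀ m, act m 1 = m)
    (act_mul : ∀ m g h, act m (g * h) = act (act m g) h)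
    (δ : G → A)
    (hδ : ∀ g h, δ (g * h) = act (δ g) h + δ h)
    (i : ℕ) :
    ∀ x ∈ (⊤ : Subgroup G).lowerCentralSeries (i - 1),
      δ x ∈ iterComm act (AddSubgroup.closure (Set.range δ)) (i - 1) := by
  have hact : IsRightAction act := ⟨act_add, act_one, act_mul⟩
  have key := IsDerivation.mem_iterComm_of_mem_lowerCentralSeries hact (n := 0) hδ
    (fun g => AddSubgroup.subset_closure (Set.mem_range_self g)) (i - 1)
  rwa [zero_add] at key

/-- If `[A, ᵢ G] = 0` then a derivation `δ : G → A` satisfies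
`δ(γᵢ(G)) ⊆ [δ(G), ᵢ₋₁ G]`.  (Here `γᵢ(G) = lowerCentralSeries G (i-1)`.) -/
theorem stmt3 {G A : Type*} [Group G] [AddCommGroup A]
    (act : A → G → A)
    (act_add : ∀ m n g, act (m + n) g = act m g + act n g)
    (act_one : ∀ m, act m 1 = m)
    (act_mul : ∀ m g h, act m (g * h) = act (act m g) h)
    (δ : G → A)
    (hδ : ∀ g h, δ (g * h) = act (δ g) h + δ h)
    (i : ℕ) (hi : 1 ≤ i)
    (htriv : iterComm act (⊤ : AddSubgroup A) i = ⊥) :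
    ∀ x ∈ (⊤ : Subgroup G).lowerCentralSeries (i - 1),
      δ x ∈ iterComm act (AddSubgroup.closure (Set.range δ)) (i - 1) :=
  stmt3_general act act_add act_one act_mul δ hδ i
end

section
/- Let G be a finite group and M a normal abelian subgroup of G, viewed as a G-module via conjugation. If δ : G → M is a derivation (i.e. δ(gh) = (δ(g))^h · δ(h)) with δ(M) = 1, then the map φ : G → G defined by φ(g) = g·δ(g) is an automorphism of G. -/
/-!
For a crossed homomorphism `δ`, the map `g ↦ g δ(g)` is a homomorphism:
`g h δ(gh) = g h · h⁻¹ δ(g) h · δ(h) = g δ(g) · h δ(h)`. If `g δ(g) = 1` then `g = δ(g)⁻¹ ∈ M`,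
so `δ(g) = 1` and `g = 1`. An injective endomorphism of a finite group is an automorphism.
-/

section CrossedHom

variable {G : Type*} [Group G] {δ : G → G}

theorem map_one_of_crossedHom (hδ : ∀ g h : G, δ (g * h) = h⁻¹ * δ g * h * δ h) : δ 1 = 1 := by
  simpa using hδ 1 1

def mulCrossedHom (δ : G → G) (hδ : ∀ g h : G, δ (g * h) = h⁻¹ * δ g * h * δ h) : G →* G where
  toFun g := g * δ g
  map_one' := by simp [map_one_of_crossedHom hδ]
  map_mul' g h := by
    simp only [hδ g h]
    group

theorem mulCrossedHom_injective (hδ : ∀ g h : G, δ (g * h) = h⁻¹ * δ g * h * δ h)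
    (M : Subgroup G) (hδM : ∀ g, δ g ∈ M) (htriv : ∀ m ∈ M, δ m = 1) :
    Function.Injective (mulCrossedHom δ hδ) := by
  rw [injective_iff_map_eq_one]
  intro g hg
  have hg_eq : g = (δ g)⁻¹ := eq_inv_of_mul_eq_one_left hg
  have hgM : g ∈ M := hg_eq ▸ M.inv_mem (hδM g)
  rw [hg_eq, htriv g hgM, inv_one]

end CrossedHom

theorem stmt5_general {G : Type*} [Group G] [Finite G] (M : Subgroup G)
    (δ : G → M)
    (hδ : ∀ g h : G, (δ (g * h) : G) = h⁻¹ * (δ g : G) * h * (δ h : G))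
    (htriv : ∀ m ∈ M, δ m = 1) :
    ∃ φ : G ≃* G, ∀ g : G, φ g = g * (δ g : G) := by
  have hδ_triv : ∀ m ∈ M, (δ m : G) = 1 := fun m hm => by simp [htriv m hm]
  have hinj := mulCrossedHom_injective hδ M (fun g => (δ g).2) hδ_triv
  exact ⟨MulEquiv.ofBijective _ (Finite.injective_iff_bijective.mp hinj), fun _ => rfl⟩

/-- Let `G` be a finite group, `M` a normal abelian subgroup viewed as a `G`-module
by conjugation, and `δ : G → M` a derivation with `δ(M) = 1`.  Then
`φ(g) = g · δ(g)` defines an automorphism of `G`. -/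
theorem stmt5 {G : Type*} [Group G] [Finite G] (M : Subgroup G) (hMn : M.Normal)
    (hab : ∀ x ∈ M, ∀ y ∈ M, x * y = y * x)
    (δ : G → M)
    (hδ : ∀ g h : G, (δ (g * h) : G) = h⁻¹ * (δ g : G) * h * (δ h : G))
    (htriv : ∀ m ∈ M, δ m = 1) :
    ∃ φ : G ≃* G, ∀ g : G, φ g = g * (δ g : G) :=
  stmt5_general M δ hδ htriv
end

section
/- Let G be a finite group, M a normal abelian subgroup of G of exponent p contained in the second center Z₂(G), and δ : G → M a derivation (with G acting by conjugation) such that δ(M) = 1 and δ vanishes on the commutator subgroup [G,G]. Then the automorphism φ(g) = g·δ(g) satisfies φ^p = id. -/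
/-! Since `δ` vanishes on `M`, the derivation rule gives `δ (g * m) = m⁻¹ * δ g * m` for `m ∈ M`;
for `m = δ g ^ n` this is just `δ g`. Hence the `n`-th iterate of `φ` sends `g` to `g * δ g ^ n`,
which for `n = p` is `g` because `M` has exponent `p`. -/

section Derivation

variable {G : Type*} [Group G] {M : Subgroup G} {δ : G → M}

theorem derivation_mul_of_mem
    (hδ : ∀ g h : G, (δ (g * h) : G) = h⁻¹ * (δ g : G) * h * (δ h : G))
    (htrivM : ∀ m ∈ M, δ m = 1) (g : G) {m : G} (hm : m ∈ M) :
    (δ (g * m) : G) = m⁻¹ * (δ g : G) * m := by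
  rw [hδ, htrivM m hm, OneMemClass.coe_one, mul_one]

theorem derivation_mul_pow_self
    (hδ : ∀ g h : G, (δ (g * h) : G) = h⁻¹ * (δ g : G) * h * (δ h : G))
    (htrivM : ∀ m ∈ M, δ m = 1) (g : G) (n : ℕ) :
    (δ (g * (δ g : G) ^ n) : G) = δ g := by
  rw [derivation_mul_of_mem hδ htrivM g (pow_mem (δ g).2 n), mul_assoc,
    (Commute.self_pow (δ g : G) n).eq, inv_mul_cancel_left]

theorem iterate_mul_derivation
    (hδ : ∀ g h : G, (δ (g * h) : G) = h⁻¹ * (δ g : G) * h * (δ h : G))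
    (htrivM : ∀ m ∈ M, δ m = 1) (g : G) (n : ℕ) :
    (fun g : G => g * (δ g : G))^[n] g = g * (δ g : G) ^ n := by
  induction n with
  | zero => simp
  | succ n ih =>
    rw [Function.iterate_succ_apply', ih, derivation_mul_pow_self hδ htrivM, mul_assoc, pow_succ]

end Derivation

theorem stmt6_general {G : Type*} [Group G] (p : ℕ)
    (M : Subgroup G)
    (hexp : ∀ m ∈ M, m ^ p = 1)
    (δ : G → M)
    (hδ : ∀ g h : G, (δ (g * h) : G) = h⁻¹ * (δ g : G) * h * (δ h : G))
    (htrivM : ∀ m ∈ M, δ m = 1) :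
    ∀ g : G, (fun g : G => g * (δ g : G))^[p] g = g := by
  intro g
  rw [iterate_mul_derivation hδ htrivM g p, hexp _ (δ g).2, mul_one]

/-- Let `G` be a finite group, `M ⊴ G` abelian of exponent `p` with `M ≤ Z₂(G)`,
and `δ : G → M` a derivation (conjugation action) with `δ(M) = 1` and `δ` trivial
on `[G,G]`.  Then the automorphism `φ(g) = g·δ(g)` satisfies `φ^p = id`. -/
theorem stmt6 {G : Type*} [Group G] [Finite G] (p : ℕ) (hp : p.Prime)
    (M : Subgroup G) (hMn : M.Normal)
    (hab : ∀ x ∈ M, ∀ y ∈ M, x * y = y * x)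
    (hexp : ∀ m ∈ M, m ^ p = 1)
    (hM2 : M ≤ upperCentralSeries G 2)
    (δ : G → M)
    (hδ : ∀ g h : G, (δ (g * h) : G) = h⁻¹ * (δ g : G) * h * (δ h : G))
    (htrivM : ∀ m ∈ M, δ m = 1)
    (htrivC : ∀ x ∈ commutator G, δ x = 1) :
    ∀ g : G, (fun g : G => g * (δ g : G))^[p] g = g :=
  stmt6_general p M hexp δ hδ htrivM
end

section
/- Let p be a prime and G a finite p-group. The following are equivalent: (1) for every i, γᵢ(G) is the unique normal subgroup of G of its order; (2) for every normal subgroup N of G and every i with 1 ≤ i ≤ c(G), either N ≤ γᵢ(G) or γᵢ(G) ≤ N. -/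
/-!
In a finite `p`-group a nontrivial normal subgroup meets the centre nontrivially, so it contains
a central, hence normal, subgroup of order `p`. Pulling such subgroups back along quotient maps,
every normal subgroup `N` contains normal subgroups of each order `p ^ m` dividing `|N|` and lies
in normal subgroups of each order `p ^ m` with `|N| ∣ p ^ m ∣ |G|`. Hence if `γᵢ(G)` is the
only normal subgroup of its order, the one of order `|γᵢ(G)|` above or below `N` is `γᵢ(G)`,
so `N` and `γᵢ(G)` are comparable; conversely, comparable subgroups of equal order coincide.
-/

open Subgroup

theorem Subgroup.normal_of_le_center {G : Type*} [Group G] {K : Subgroup G}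
    (h : K ≤ center G) : K.Normal :=
  ⟨fun n hn g => by rwa [mem_center_iff.mp (h hn) g, mul_inv_cancel_right]⟩

theorem QuotientGroup.card_comap_mk' {G : Type*} [Group G] (N : Subgroup G) [N.Normal]
    (K : Subgroup (G ⧸ N)) :
    Nat.card (K.comap (QuotientGroup.mk' N)) = Nat.card N * Nat.card K :=
  QuotientGroup.card_preimage_mk N K

namespace IsPGroup

variable {p : ℕ} [Fact p.Prime] {G : Type*} [Group G] [Finite G]

theorem inf_center_nontrivial (hG : IsPGroup p G) (N : Subgroup G) [N.Normal] [Nontrivial N] :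
    Nontrivial ↥(N ⊓ center G) := by
  have hpN : p ∣ Nat.card N :=
    (hG.to_subgroup N).card_eq_or_dvd.resolve_left Finite.one_lt_card.ne'
  -- a fixed point `x ≠ 1` of `ConjAct G` acting on `N` is central
  have hGconj : IsPGroup p (ConjAct G) := hG.of_equiv ConjAct.toConjAct
  obtain ⟨x, hx, hx1⟩ :=
    hGconj.exists_fixed_point_of_prime_dvd_card_of_fixed_point N hpN (a := 1) fun g => smul_one g
  refine (nontrivial_iff_exists_ne_one _).mpr
    ⟨x, ⟨x.2, mem_center_iff.mpr fun g => ?_⟩, fun h => hx1 (Subtype.ext h.symm)⟩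
  have hfix := congrArg Subtype.val (hx (ConjAct.toConjAct g))
  rw [ConjAct.Subgroup.val_conj_smul, ConjAct.toConjAct_smul] at hfix
  exact mul_inv_eq_iff_eq_mul.mp hfix

theorem exists_normal_le_card_eq_prime (hG : IsPGroup p G) (N : Subgroup G) [N.Normal]
    [Nontrivial N] : ∃ K : Subgroup G, K.Normal ∧ K ≤ N ∧ Nat.card K = p := by
  have := hG.inf_center_nontrivial N
  have hpC : p ∣ Nat.card ↥(N ⊓ center G) :=
    (hG.to_subgroup _).card_eq_or_dvd.resolve_left Finite.one_lt_card.ne'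
  obtain ⟨c, hc⟩ := exists_prime_orderOf_dvd_card' p hpC
  refine ⟨zpowers (c : G), normal_of_le_center (zpowers_le.mpr c.2.2), zpowers_le.mpr c.2.1, ?_⟩
  rw [Nat.card_zpowers, orderOf_coe, hc]

theorem exists_normal_le_card_eq (hG : IsPGroup p G) {N : Subgroup G} [N.Normal] {m : ℕ}
    (hm : p ^ m ∣ Nat.card N) :
    ∃ M : Subgroup G, M.Normal ∧ M ≤ N ∧ Nat.card M = p ^ m := by
  induction m with
  | zero => exact ⟨⊥, inferInstance, bot_le, by simp⟩
  | succ m ih =>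
    obtain ⟨M, hM, hMN, hMcard⟩ := ih ((pow_dvd_pow p m.le_succ).trans hm)
    have hNM : Nontrivial ↥(N.map (QuotientGroup.mk' M)) := by
      rw [nontrivial_iff_ne_bot, Ne, Subgroup.map_eq_bot_iff, QuotientGroup.ker_mk']
      intro hle
      have := hm.trans (card_dvd_of_le hle)
      rw [hMcard, Nat.pow_dvd_pow_iff_le_right (Fact.out : p.Prime).one_lt] at this
      omega
    obtain ⟨K, hK, hKN, hKcard⟩ :=
      (hG.to_quotient M).exists_normal_le_card_eq_prime (N.map (QuotientGroup.mk' M))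
    refine ⟨K.comap (QuotientGroup.mk' M), hK.comap _, ?_, ?_⟩
    · have hker : (QuotientGroup.mk' M).ker ≤ N := by rwa [QuotientGroup.ker_mk']
      exact comap_map_eq_self hker ▸ comap_mono hKN
    · rw [QuotientGroup.card_comap_mk', hMcard, hKcard, pow_succ]

theorem exists_normal_ge_card_eq (hG : IsPGroup p G) {N : Subgroup G} [N.Normal] {m : ℕ}
    (hNm : Nat.card N ∣ p ^ m) (hm : p ^ m ∣ Nat.card G) :
    ∃ M : Subgroup G, M.Normal ∧ N ≤ M ∧ Nat.card M = p ^ m := by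
  obtain ⟨t, ht⟩ := hNm
  obtain ⟨s, -, rfl⟩ := (Nat.dvd_prime_pow Fact.out).mp (Dvd.intro_left _ ht.symm)
  have hs : p ^ s ∣ Nat.card (⊤ : Subgroup (G ⧸ N)) := by
    rw [card_top, ← Nat.mul_dvd_mul_iff_left (Nat.card_pos (α := N)), ← ht, mul_comm,
      ← card_eq_card_quotient_mul_card_subgroup]
    exact hm
  obtain ⟨M, hM, -, hMcard⟩ := (hG.to_quotient N).exists_normal_le_card_eq hs
  refine ⟨M.comap (QuotientGroup.mk' N), hM.comap _, ?_, ?_⟩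
  · simpa using ker_le_comap (QuotientGroup.mk' N) M
  · rw [QuotientGroup.card_comap_mk', hMcard, ht]

theorem le_or_le_of_forall_card_eq (hG : IsPGroup p G) {H : Subgroup G}
    (hH : ∀ M : Subgroup G, M.Normal → Nat.card M = Nat.card H → M = H)
    (N : Subgroup G) [N.Normal] : N ≤ H ∨ H ≤ N := by
  obtain ⟨a, ha⟩ := (hG.to_subgroup N).exists_card_eq
  obtain ⟨b, hb⟩ := (hG.to_subgroup H).exists_card_eq
  rcases le_total a b with hab | hba
  · obtain ⟨M, hM, hNM, hMcard⟩ := hG.exists_normal_ge_card_eq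
      (ha ▸ pow_dvd_pow p hab) (hb ▸ card_subgroup_dvd_card H)
    exact Or.inl (hH M hM (hMcard.trans hb.symm) ▸ hNM)
  · obtain ⟨M, hM, hMN, hMcard⟩ := hG.exists_normal_le_card_eq (ha ▸ pow_dvd_pow p hba)
    exact Or.inr (hH M hM (hMcard.trans hb.symm) ▸ hMN)

end IsPGroup

/-- For a finite `p`-group `G`, the following are equivalent: every term `γᵢ(G)` of
the lower central series (for `1 ≤ i ≤ c(G)`) is the unique normal subgroup of its
order, and every normal subgroup is comparable to every such `γᵢ(G)`.
(Here `γᵢ(G) = lowerCentralSeries G (i-1)`, so `i` ranges over indices `< c(G)`.) -/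
theorem stmt7 {G : Type*} [Group G] [Finite G] (p : ℕ) (hp : p.Prime)
    (hpg : IsPGroup p G) [Group.IsNilpotent G] :
    (∀ i < Group.nilpotencyClass G, ∀ N : Subgroup G, N.Normal →
        Nat.card N = Nat.card ((⊤ : Subgroup G).lowerCentralSeries i) → N = (⊤ : Subgroup G).lowerCentralSeries i) ↔
      (∀ N : Subgroup G, N.Normal → ∀ i < Group.nilpotencyClass G,
        N ≤ (⊤ : Subgroup G).lowerCentralSeries i ∨ (⊤ : Subgroup G).lowerCentralSeries i ≤ N) := by
  have : Fact p.Prime := ⟨hp⟩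
  constructor
  · exact fun h N _ i hi => hpg.le_or_le_of_forall_card_eq (h i hi) N
  · intro h i hi N hN hcard
    rcases h N hN i hi with hle | hge
    · exact eq_of_le_of_card_ge hle hcard.ge
    · exact (eq_of_le_of_card_ge hge hcard.le).symm
end

section
/- Let p be a prime and G a finite p-group of maximal class (nilpotency class equal to log_p|G| − 1, with |G| ≥ p⁴). Then every antichain in the lattice of normal subgroups of G has at most p+1 elements, i.e. G is thin. -/
/-- A finite `p`-group is thin if every antichain in its lattice of normal
subgroups has at most `p + 1` elements. -/
def IsThin (p : ℕ) (G : Type*) [Group G] : Prop :=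
  ∀ S : Set (Subgroup G), (∀ N ∈ S, N.Normal) →
    (∀ N ∈ S, ∀ M ∈ S, N ≤ M → N = M) → S.ncard ≤ p + 1

/-!
Every nontrivial normal subgroup of a `p`-group meets the centre nontrivially. If `G` has order
`p ^ (n + 1)` and class `n ≥ 2`, then `p ^ n` divides `|G / Z(G)|` (induction on the class: the
centre of a nontrivial `p`-group has order divisible by `p`, and `G / Z(G)` is never cyclic for
class `≥ 2`), so `|Z(G)| = p`. Hence
every nontrivial normal subgroup contains `Z(G)`, an antichain other than `{1}` embeds into the
normal subgroups of `G / Z(G)`, and `G / Z(G)` is again of maximal class. By induction we reach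
order `p ^ 2`, where an antichain with two or more members consists of subgroups of order `p`
meeting pairwise trivially; counting non-identity elements, there are at most
`(p ^ 2 - 1) / (p - 1) = p + 1` of them.
-/
section

open Subgroup

variable {G : Type*} [Group G]

lemma Subgroup.ncard_mul_le_of_pairwise_inf_eq_bot [Finite G] {q : ℕ} {S : Set (Subgroup G)}
    (hcard : ∀ N ∈ S, Nat.card N = q) (hS : S.Pairwise fun N M ↦ N ⊓ M = ⊥) :
    S.ncard * (q - 1) ≤ Nat.card G - 1 := by
  have hdisj : S.PairwiseDisjoint fun N : Subgroup G ↦ (N : Set G) \ {1} := by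
    intro N hN M hM hNM
    rw [Function.onFun, Set.disjoint_left]
    rintro g ⟨hgN, hg1⟩ ⟨hgM, -⟩
    have hg : g ∈ N ⊓ M := ⟨hgN, hgM⟩
    rw [hS hN hM hNM, mem_bot] at hg
    exact hg1 hg
  have hsub : (⋃ N ∈ S, (N : Set G) \ {1}) ⊆ {1}ᶜ := by
    simp only [Set.iUnion_subset_iff]
    exact fun N _ ↦ Set.sdiff_subset_compl _ _
  calc S.ncard * (q - 1) = ∑ᶠ N ∈ S, ((N : Set G) \ {1}).ncard := by
        rw [← finsum_one, finsum_mem_mul' _ _ S.toFinite, one_mul]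
        refine finsum_mem_congr rfl fun N hN ↦ ?_
        rw [Set.ncard_sdiff_singleton_of_mem N.one_mem, ← Nat.card_coe_set_eq, ← hcard N hN]
        rfl
    _ = (⋃ N ∈ S, (N : Set G) \ {1}).ncard :=
        (S.toFinite.ncard_biUnion (fun _ _ ↦ Set.toFinite _) hdisj).symm
    _ ≤ ({1}ᶜ : Set G).ncard := Set.ncard_le_ncard hsub
    _ = Nat.card G - 1 := by rw [Set.ncard_compl, Set.ncard_singleton]

lemma Subgroup.eq_bot_or_eq_of_le_of_card_eq_prime {p : ℕ} [Fact p.Prime] {H K : Subgroup G}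
    (hle : H ≤ K) (hK : Nat.card K = p) : H = ⊥ ∨ H = K := by
  have : Finite K := Nat.finite_of_card_ne_zero (hK ▸ NeZero.ne p)
  refine ((Nat.dvd_prime Fact.out).mp (hK ▸ card_dvd_of_le hle)).imp card_eq_one.mp fun h ↦ ?_
  exact eq_of_le_of_card_ge hle (by rw [h, hK])

lemma isThin_of_card_eq_prime_sq {p : ℕ} [Fact p.Prime] (hG : Nat.card G = p ^ 2) :
    IsThin p G := by
  intro S _ hanti
  have : Finite G := Nat.finite_of_card_ne_zero (hG ▸ pow_ne_zero 2 (NeZero.ne p))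
  rcases le_or_gt S.ncard 1 with hS | hS
  · omega
  have hcard : ∀ N ∈ S, Nat.card N = p := by
    intro N hN
    obtain ⟨M, hM, hMN⟩ := Set.exists_ne_of_one_lt_ncard hS N
    obtain ⟨j, hj, hN'⟩ := (Nat.dvd_prime_pow Fact.out).mp (hG ▸ card_subgroup_dvd_card N)
    interval_cases j
    · rw [pow_zero, card_eq_one] at hN'
      exact absurd (hanti N hN M hM (hN' ▸ bot_le)) hMN.symm
    · exact hN'.trans (pow_one p)
    · have : N = ⊤ := eq_top_of_card_eq N (hN'.trans hG.symm)
      exact absurd (hanti M hM N hN (this ▸ le_top)) hMN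
  have hinf : S.Pairwise fun N M ↦ N ⊓ M = ⊥ := fun N hN M hM hNM ↦
    (eq_bot_or_eq_of_le_of_card_eq_prime inf_le_left (hcard N hN)).resolve_right
      fun h ↦ hNM (hanti N hN M hM (h ▸ inf_le_right))
  have hp := (Fact.out : p.Prime).two_le
  have hcount := ncard_mul_le_of_pairwise_inf_eq_bot hcard hinf
  rw [hG, show p ^ 2 - 1 = (p + 1) * (p - 1) by
    rw [← Nat.sq_sub_sq, one_pow]] at hcount
  exact Nat.le_of_mul_le_mul_right hcount (by omega)

lemma IsThin.ncard_le_of_forall_le {p : ℕ} {K : Subgroup G} [K.Normal] (hQ : IsThin p (G ⧸ K))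
    {S : Set (Subgroup G)} (hnorm : ∀ N ∈ S, N.Normal) (hanti : ∀ N ∈ S, ∀ M ∈ S, N ≤ M → N = M)
    (hK : ∀ N ∈ S, K ≤ N) : S.ncard ≤ p + 1 := by
  set f := QuotientGroup.mk' K
  have hcomap : ∀ N ∈ S, (N.map f).comap f = N := fun N hN ↦ by
    rw [comap_map_eq, QuotientGroup.ker_mk', sup_eq_left.mpr (hK N hN)]
  have hinj : S.InjOn (map f) := fun N hN M hM h ↦ by
    rw [← hcomap N hN, ← hcomap M hM, h]
  rw [← hinj.ncard_image]
  refine hQ _ ?_ ?_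
  · rintro _ ⟨N, hN, rfl⟩
    exact (hnorm N hN).map f (QuotientGroup.mk'_surjective K)
  · rintro _ ⟨N, hN, rfl⟩ _ ⟨M, hM, rfl⟩ hle
    rw [hanti N hN M hM (hcomap N hN ▸ hcomap M hM ▸ comap_mono hle)]

lemma not_isCyclic_quotient_center_of_two_le_nilpotencyClass [Group.IsNilpotent G]
    (h : 2 ≤ Group.nilpotencyClass G) : ¬IsCyclic (G ⧸ center G) := fun _ ↦ by
  have := Group.IsNilpotent.nilpotencyClass_le_one_iff.mpr
    (isMulCommutative_of_isCyclic_quotient_center_self G)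
  omega

namespace IsPGroup

variable {p : ℕ} [Fact p.Prime]

lemma dvd_card_of_nontrivial [Finite G] [Nontrivial G] (hG : IsPGroup p G) : p ∣ Nat.card G := by
  obtain ⟨k, hk, hcard⟩ := hG.nontrivial_iff_card.mp ‹_›
  exact hcard ▸ dvd_pow_self p hk.ne'

lemma sq_dvd_card_of_not_isCyclic [Finite G] (hG : IsPGroup p G) (hcyc : ¬IsCyclic G) :
    p ^ 2 ∣ Nat.card G := by
  obtain ⟨k, hk⟩ := iff_card.mp hG
  rcases lt_or_ge k 2 with hk2 | hk2
  · interval_cases k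
    · have : Subsingleton G := (Nat.card_eq_one_iff_unique.mp (hk.trans (pow_zero p))).1
      exact absurd isCyclic_of_subsingleton hcyc
    · exact absurd (isCyclic_of_prime_card (hk.trans (pow_one p))) hcyc
  · exact hk ▸ pow_dvd_pow p hk2

lemma pow_nilpotencyClass_dvd_card_quotient_center [Finite G] [Group.IsNilpotent G]
    (hG : IsPGroup p G) (h2 : 2 ≤ Group.nilpotencyClass G) :
    p ^ Group.nilpotencyClass G ∣ Nat.card (G ⧸ center G) := by
  generalize hc : Group.nilpotencyClass G = c at h2 ⊢
  induction c, h2 using Nat.le_induction generalizing G with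
  | base =>
    exact (hG.to_quotient _).sq_dvd_card_of_not_isCyclic
      (not_isCyclic_quotient_center_of_two_le_nilpotencyClass hc.ge)
  | succ c hc2 ih =>
    have hQ : Group.nilpotencyClass (G ⧸ center G) = c := by
      rw [Group.nilpotencyClass_quotient_center, hc, Nat.add_sub_cancel]
    have : Nontrivial (G ⧸ center G) := not_subsingleton_iff_nontrivial.mp fun h ↦ by
      have := Group.nilpotencyClass_zero_iff_subsingleton.mpr h
      omega
    have hQp : IsPGroup p (G ⧸ center G) := hG.to_quotient _
    have := hQp.center_nontrivial
    have hZ := (hQp.to_subgroup (center _)).dvd_card_of_nontrivial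
    rw [card_eq_card_quotient_mul_card_subgroup (center (G ⧸ center G)), pow_succ]
    exact mul_dvd_mul (ih hQp hQ) hZ

lemma inf_center_ne_bot [Finite G] (hG : IsPGroup p G) {N : Subgroup G} (hN : N.Normal)
    (hN' : N ≠ ⊥) : N ⊓ center G ≠ ⊥ := by
  have : Nontrivial N := N.nontrivial_iff_ne_bot.mpr hN'
  have h1 : (1 : N) ∈ MulAction.fixedPoints (ConjAct G) N := smul_one
  obtain ⟨g, hg, hg1⟩ :=
    (hG.of_equiv ConjAct.toConjAct).exists_fixed_point_of_prime_dvd_card_of_fixed_point N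
      (hG.to_subgroup N).dvd_card_of_nontrivial h1
  refine ne_bot_iff_exists_ne_one.mpr ⟨⟨g, g.2, mem_center_iff.mpr fun h ↦ ?_⟩, ?_⟩
  · have hval := congrArg Subtype.val (hg (ConjAct.toConjAct h))
    rw [ConjAct.Subgroup.val_conj_smul, ConjAct.toConjAct_smul] at hval
    exact mul_inv_eq_iff_eq_mul.mp hval
  · exact fun h ↦ hg1 (Subtype.ext (congrArg Subtype.val h).symm)

lemma center_le_of_card_center_eq [Finite G] (hG : IsPGroup p G) (hZ : Nat.card (center G) = p)
    {N : Subgroup G} (hN : N.Normal) (hN' : N ≠ ⊥) : center G ≤ N :=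
  (eq_bot_or_eq_of_le_of_card_eq_prime inf_le_right hZ).resolve_left
    (hG.inf_center_ne_bot hN hN') ▸ inf_le_left

lemma card_center_eq_of_nilpotencyClass_eq [Group.IsNilpotent G] (hG : IsPGroup p G) {n : ℕ}
    (hcard : Nat.card G = p ^ (n + 1)) (hclass : Group.nilpotencyClass G = n) (hn : 2 ≤ n) :
    Nat.card (center G) = p := by
  have : Finite G := Nat.finite_of_card_ne_zero (hcard ▸ pow_ne_zero _ (NeZero.ne p))
  have hprod := card_eq_card_quotient_mul_card_subgroup (center G)
  have hQ := hG.pow_nilpotencyClass_dvd_card_quotient_center (hclass ▸ hn)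
  rw [hclass] at hQ
  have : Nontrivial G := hG.nontrivial_iff_card.mpr ⟨_, n.succ_pos, hcard⟩
  have := hG.center_nontrivial
  refine Nat.dvd_antisymm ?_ (hG.to_subgroup _).dvd_card_of_nontrivial
  refine (mul_dvd_mul_iff_left (pow_ne_zero n (NeZero.ne p))).mp ?_
  rw [← pow_succ, ← hcard, hprod]
  exact mul_dvd_mul_right hQ _

lemma isThin_of_nilpotencyClass_eq [Group.IsNilpotent G] (hG : IsPGroup p G) {n : ℕ} (hn : 2 ≤ n)
    (hcard : Nat.card G = p ^ n) (hclass : Group.nilpotencyClass G = n - 1) : IsThin p G := by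
  induction n, hn using Nat.le_induction generalizing G with
  | base => exact isThin_of_card_eq_prime_sq hcard
  | succ n hn ih =>
    rw [Nat.add_sub_cancel] at hclass
    have : Finite G := Nat.finite_of_card_ne_zero (hcard ▸ pow_ne_zero _ (NeZero.ne p))
    have hZ := hG.card_center_eq_of_nilpotencyClass_eq hcard hclass hn
    have hQ : IsThin p (G ⧸ center G) := by
      refine ih (hG.to_quotient _) ?_ (by rw [Group.nilpotencyClass_quotient_center, hclass])
      have hprod := card_eq_card_quotient_mul_card_subgroup (center G)
      rw [hcard, hZ, pow_succ] at hprod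
      exact (Nat.eq_of_mul_eq_mul_right (NeZero.pos p) hprod).symm
    intro S hnorm hanti
    by_cases hbot : ⊥ ∈ S
    · have hS : S ⊆ {⊥} := fun N hN ↦ (hanti ⊥ hbot N hN bot_le).symm
      have := Set.ncard_le_ncard hS
      rw [Set.ncard_singleton] at this
      omega
    · exact hQ.ncard_le_of_forall_le hnorm hanti fun N hN ↦
        hG.center_le_of_card_center_eq hZ (hnorm N hN) (ne_of_mem_of_not_mem hN hbot)

end IsPGroup

end

theorem stmt14_general {G : Type*} [Group G] (p : ℕ) (hp : p.Prime)
    (hpg : IsPGroup p G) [Group.IsNilpotent G]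
    (n : ℕ) (hcard : Nat.card G = p ^ n) (hn : 4 ≤ n)
    (hclass : Group.nilpotencyClass G = n - 1) :
    IsThin p G :=
  have : Fact p.Prime := ⟨hp⟩
  hpg.isThin_of_nilpotencyClass_eq (by omega) hcard hclass

/-- A finite `p`-group of maximal class (with `|G| = pⁿ`, `n ≥ 4`, and class `n-1`)
is thin. -/
theorem stmt14 {G : Type*} [Group G] [Finite G] (p : ℕ) (hp : p.Prime)
    (hpg : IsPGroup p G) [Group.IsNilpotent G]
    (n : ℕ) (hcard : Nat.card G = p ^ n) (hn : 4 ≤ n)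
    (hclass : Group.nilpotencyClass G = n - 1) :
    IsThin p G :=
  stmt14_general p hp hpg n hcard hn hclass
end
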